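/- Let n ≥ 1, μ ∈ ℝⁿ, and Σ a positive definite symmetric real n×n matrix, and let ν = ν_{μ,Σ} be the corresponding Gaussian measure on ℝⁿ. With M(x) = −(1/2)Σ⁻¹ + (1/2)Σ⁻¹(x−μ)(x−μ)ᵀΣ⁻¹ and K = Σ⁻¹, for all indices a, b, c, d one has ∫ M(x)_{ab}·M(x)_{cd} dν(x) = (1/4)(K_{ac}K_{bd} + K_{ad}K_{bc}). (This is the (Σ,Σ)-block g_{ΣΣ} = (1/2)Σ⁻¹⊗Σ⁻¹ of the Fisher metric tensor of the multivariate Gaussian family, written in symmetrized component form.) -/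

import Mathlib

/-!
Write `Σ = A Aᵀ`. The substitution `x = A y + μ` turns `ν_{μ,Σ}` into the standard Gaussian on
`ℝⁿ`, whose density is a product of one-dimensional ones, and turns `M(x)_{ab}` into
`½ (⟨u_a, y⟩ ⟨u_b, y⟩ - ⟨u_a, u_b⟩)`, where `u_a` is the `a`-th row of `A⁻ᵀ`, so that
`K_{ab} = ⟨u_a, u_b⟩`. By Fubini, moments of the standard Gaussian factor into one-dimensional
moments `1, 0, 1, 0, 3`, which come from the integration by parts recursion
`m_{k+1} = k m_{k-1}`. This gives Isserlis' formula
`E[y_i y_j y_k y_l] = δ_ij δ_kl + δ_ik δ_jl + δ_il δ_jk`, and the covariance of the two centred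
quadratic forms is then `⟨u_a, u_c⟩ ⟨u_b, u_d⟩ + ⟨u_a, u_d⟩ ⟨u_b, u_c⟩`.
-/

open MeasureTheory Matrix Real

/-- The Lebesgue density of the multivariate Gaussian distribution with mean `μ` and
covariance matrix `S` on `ℝⁿ`. -/
noncomputable def mvGaussDensity {n : ℕ} (μ : Fin n → ℝ) (S : Matrix (Fin n) (Fin n) ℝ)
    (x : Fin n → ℝ) : ℝ :=
  (2 * π) ^ (-(n : ℝ) / 2) * S.det ^ (-(1 : ℝ) / 2) *
    Real.exp (-(1 / 2) * ((x - μ) ⬝ᵥ (S⁻¹ *ᵥ (x - μ))))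

/-- The multivariate Gaussian measure `ν_{μ,Σ}` on `ℝⁿ`, given by its Lebesgue density. -/
noncomputable def mvGaussMeasure {n : ℕ} (μ : Fin n → ℝ) (S : Matrix (Fin n) (Fin n) ℝ) :
    Measure (Fin n → ℝ) :=
  volume.withDensity fun x => ENNReal.ofReal (mvGaussDensity μ S x)

/-- The score of the multivariate Gaussian log-likelihood with respect to the covariance
parameter: M(x) = −(1/2)Σ⁻¹ + (1/2)Σ⁻¹(x−μ)(x−μ)ᵀΣ⁻¹. -/
noncomputable def mvScoreSigma {n : ℕ} (μ : Fin n → ℝ) (S : Matrix (Fin n) (Fin n) ℝ)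
    (x : Fin n → ℝ) : Matrix (Fin n) (Fin n) ℝ :=
  (-(1 / 2) : ℝ) • S⁻¹ + ((1 / 2) : ℝ) • (S⁻¹ * Matrix.vecMulVec (x - μ) (x - μ) * S⁻¹)

open ProbabilityTheory

lemma gaussianPDFReal_zero_one :
    gaussianPDFReal 0 1 = fun x => (√(2 * π))⁻¹ * rexp (-(1 / 2) * x ^ 2) := by
  ext x
  simp only [gaussianPDFReal, NNReal.coe_one, mul_one, sub_zero]
  ring_nf

lemma hasDerivAt_gaussianPDFReal_zero_one (x : ℝ) :
    HasDerivAt (gaussianPDFReal 0 1) (-x * gaussianPDFReal 0 1 x) x := by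
  rw [gaussianPDFReal_zero_one]
  refine ((((hasDerivAt_pow 2 x).const_mul (-(1 / 2) : ℝ)).exp).const_mul
    (√(2 * π))⁻¹).congr_deriv ?_
  push_cast
  ring

lemma integrable_pow_mul_gaussianPDFReal_zero_one (k : ℕ) :
    Integrable fun x : ℝ => x ^ k * gaussianPDFReal 0 1 x := by
  have h := (integrable_rpow_mul_exp_neg_mul_sq (by norm_num : (0 : ℝ) < 1 / 2)
    (s := k) (by linarith [(k.cast_nonneg : (0 : ℝ) ≤ k)])).const_mul (√(2 * π))⁻¹
  refine h.congr (ae_of_all _ fun x => ?_)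
  simp only [gaussianPDFReal_zero_one, Real.rpow_natCast]
  ring

noncomputable def stdGaussianMoment (k : ℕ) : ℝ := ∫ x : ℝ, x ^ k * gaussianPDFReal 0 1 x

@[simp] lemma stdGaussianMoment_zero : stdGaussianMoment 0 = 1 := by
  simp [stdGaussianMoment, integral_gaussianPDFReal_eq_one]

/-- At `k = 0` the truncated `k - 1` is harmless, since the factor `k` vanishes. -/
lemma stdGaussianMoment_succ (k : ℕ) :
    stdGaussianMoment (k + 1) = k * stdGaussianMoment (k - 1) := by
  have h := integral_mul_deriv_eq_deriv_mul_of_integrable (u := fun x : ℝ => x ^ k)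
    (v := gaussianPDFReal 0 1) (u' := fun x => k * x ^ (k - 1))
    (v' := fun x => -x * gaussianPDFReal 0 1 x)
    (fun x _ => hasDerivAt_pow k x) (fun x _ => hasDerivAt_gaussianPDFReal_zero_one x)
    ((integrable_pow_mul_gaussianPDFReal_zero_one (k + 1)).neg.congr (ae_of_all _ fun x => by
      simp only [Pi.mul_apply, Pi.neg_apply, pow_succ]; ring))
    (((integrable_pow_mul_gaussianPDFReal_zero_one (k - 1)).const_mul k).congr
      (ae_of_all _ fun x => by simp only [Pi.mul_apply]; ring))
    (integrable_pow_mul_gaussianPDFReal_zero_one k)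
  simp only [mul_neg, neg_mul, integral_neg, neg_inj] at h
  simp only [stdGaussianMoment, ← integral_const_mul, pow_succ, mul_assoc, h]

@[simp] lemma stdGaussianMoment_one : stdGaussianMoment 1 = 0 := by
  simpa using stdGaussianMoment_succ 0

@[simp] lemma stdGaussianMoment_two : stdGaussianMoment 2 = 1 := by
  simpa using stdGaussianMoment_succ 1

@[simp] lemma stdGaussianMoment_three : stdGaussianMoment 3 = 0 := by
  simpa using stdGaussianMoment_succ 2

@[simp] lemma stdGaussianMoment_four : stdGaussianMoment 4 = 3 := by
  simpa using stdGaussianMoment_succ 3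

section StdGaussianDensity

variable {ι : Type*} [Fintype ι]

noncomputable def stdGaussianDensity (y : ι → ℝ) : ℝ := ∏ t, gaussianPDFReal 0 1 (y t)

lemma prod_pow_mul_stdGaussianDensity (c : ι → ℕ) (y : ι → ℝ) :
    (∏ t, y t ^ c t) * stdGaussianDensity y = ∏ t, y t ^ c t * gaussianPDFReal 0 1 (y t) :=
  Finset.prod_mul_distrib.symm

lemma integrable_prod_pow_mul_stdGaussianDensity (c : ι → ℕ) :
    Integrable fun y : ι → ℝ => (∏ t, y t ^ c t) * stdGaussianDensity y := by
  simp_rw [prod_pow_mul_stdGaussianDensity]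
  exact Integrable.fintype_prod fun t => integrable_pow_mul_gaussianPDFReal_zero_one (c t)

lemma integral_prod_pow_mul_stdGaussianDensity (c : ι → ℕ) :
    ∫ y : ι → ℝ, (∏ t, y t ^ c t) * stdGaussianDensity y = ∏ t, stdGaussianMoment (c t) := by
  simp_rw [prod_pow_mul_stdGaussianDensity]
  exact integral_fintype_prod_volume_eq_prod fun t x => x ^ c t * gaussianPDFReal 0 1 x

lemma integrable_stdGaussianDensity : Integrable (stdGaussianDensity (ι := ι)) := by
  simpa using integrable_prod_pow_mul_stdGaussianDensity (ι := ι) 0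

lemma integral_stdGaussianDensity : ∫ y : ι → ℝ, stdGaussianDensity y = 1 := by
  simpa using integral_prod_pow_mul_stdGaussianDensity (ι := ι) 0

lemma prod_stdGaussianMoment_eq_prod_finset (c : ι → ℕ) (s : Finset ι)
    (hc : ∀ t ∉ s, c t = 0) :
    ∏ t, stdGaussianMoment (c t) = ∏ t ∈ s, stdGaussianMoment (c t) :=
  (Finset.prod_subset s.subset_univ fun t _ ht => by simp [hc t ht]).symm

variable [DecidableEq ι]

lemma prod_pow_single (y : ι → ℝ) (i : ι) : ∏ t, y t ^ (Pi.single i 1 : ι → ℕ) t = y i := by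
  simp [Pi.single_apply, pow_ite]

lemma prod_stdGaussianMoment_single_add_single (i j : ι) :
    ∏ t, stdGaussianMoment ((Pi.single i 1 + Pi.single j 1 : ι → ℕ) t) =
      if i = j then 1 else 0 := by
  rw [prod_stdGaussianMoment_eq_prod_finset _ {i, j} (by intro t ht; simp_all)]
  by_cases hij : i = j <;> simp_all [Finset.prod_insert, eq_comm]

lemma prod_stdGaussianMoment_single_add_single_add_single_add_single (i j k l : ι) :
    ∏ t, stdGaussianMoment
        ((Pi.single i 1 + Pi.single j 1 + Pi.single k 1 + Pi.single l 1 : ι → ℕ) t) =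
      (if i = j then 1 else 0) * (if k = l then 1 else 0) +
      (if i = k then 1 else 0) * (if j = l then 1 else 0) +
      (if i = l then 1 else 0) * (if j = k then 1 else 0) := by
  rw [prod_stdGaussianMoment_eq_prod_finset _ {i, j, k, l} (by intro t ht; simp_all)]
  by_cases hij : i = j <;> by_cases hik : i = k <;> by_cases hil : i = l <;>
    by_cases hjk : j = k <;> by_cases hjl : j = l <;> by_cases hkl : k = l <;>
    simp_all [Finset.prod_insert, eq_comm, (by norm_num : (1 : ℝ) + 1 + 1 = 3)]

lemma mul_mul_stdGaussianDensity_eq (i j : ι) (y : ι → ℝ) :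
    y i * y j * stdGaussianDensity y =
      (∏ t, y t ^ (Pi.single i 1 + Pi.single j 1 : ι → ℕ) t) * stdGaussianDensity y := by
  simp only [Pi.add_apply, pow_add, Finset.prod_mul_distrib, prod_pow_single]

lemma mul_mul_mul_mul_stdGaussianDensity_eq (i j k l : ι) (y : ι → ℝ) :
    y i * y j * y k * y l * stdGaussianDensity y =
      (∏ t, y t ^ (Pi.single i 1 + Pi.single j 1 + Pi.single k 1 + Pi.single l 1 : ι → ℕ) t) *
        stdGaussianDensity y := by
  simp only [Pi.add_apply, pow_add, Finset.prod_mul_distrib, prod_pow_single]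

lemma integrable_mul_mul_stdGaussianDensity (i j : ι) :
    Integrable fun y : ι → ℝ => y i * y j * stdGaussianDensity y := by
  simpa only [mul_mul_stdGaussianDensity_eq] using integrable_prod_pow_mul_stdGaussianDensity _

lemma integral_mul_mul_stdGaussianDensity (i j : ι) :
    ∫ y : ι → ℝ, y i * y j * stdGaussianDensity y = if i = j then 1 else 0 := by
  simp only [mul_mul_stdGaussianDensity_eq, integral_prod_pow_mul_stdGaussianDensity,
    prod_stdGaussianMoment_single_add_single]

lemma integrable_mul_mul_mul_mul_stdGaussianDensity (i j k l : ι) :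
    Integrable fun y : ι → ℝ => y i * y j * y k * y l * stdGaussianDensity y := by
  simpa only [mul_mul_mul_mul_stdGaussianDensity_eq] using
    integrable_prod_pow_mul_stdGaussianDensity _

lemma integral_mul_mul_mul_mul_stdGaussianDensity (i j k l : ι) :
    ∫ y : ι → ℝ, y i * y j * y k * y l * stdGaussianDensity y =
      (if i = j then 1 else 0) * (if k = l then 1 else 0) +
      (if i = k then 1 else 0) * (if j = l then 1 else 0) +
      (if i = l then 1 else 0) * (if j = k then 1 else 0) := by
  simp only [mul_mul_mul_mul_stdGaussianDensity_eq, integral_prod_pow_mul_stdGaussianDensity,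
    prod_stdGaussianMoment_single_add_single_add_single_add_single]

lemma sub_mul_sub_mul_stdGaussianDensity_eq (i j k l : ι) (y : ι → ℝ) :
    (y i * y j - if i = j then 1 else 0) * (y k * y l - if k = l then 1 else 0) *
        stdGaussianDensity y =
      y i * y j * y k * y l * stdGaussianDensity y
        - (if k = l then 1 else 0) * (y i * y j * stdGaussianDensity y)
        - (if i = j then 1 else 0) * (y k * y l * stdGaussianDensity y)
        + (if i = j then 1 else 0) * (if k = l then 1 else 0) * stdGaussianDensity y := by
  ring

lemma integrable_sub_mul_sub_mul_stdGaussianDensity (i j k l : ι) :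
    Integrable fun y : ι → ℝ => (y i * y j - if i = j then 1 else 0) *
      (y k * y l - if k = l then 1 else 0) * stdGaussianDensity y := by
  have h4 := integrable_mul_mul_mul_mul_stdGaussianDensity i j k l
  have hij := integrable_mul_mul_stdGaussianDensity i j
  have hkl := integrable_mul_mul_stdGaussianDensity k l
  have h0 := integrable_stdGaussianDensity (ι := ι)
  simp only [sub_mul_sub_mul_stdGaussianDensity_eq]
  fun_prop

lemma integral_sub_mul_sub_mul_stdGaussianDensity (i j k l : ι) :
    ∫ y : ι → ℝ, (y i * y j - if i = j then 1 else 0) *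
        (y k * y l - if k = l then 1 else 0) * stdGaussianDensity y =
      (if i = k then 1 else 0) * (if j = l then 1 else 0) +
      (if i = l then 1 else 0) * (if j = k then 1 else 0) := by
  have h4 := integrable_mul_mul_mul_mul_stdGaussianDensity i j k l
  have hij := integrable_mul_mul_stdGaussianDensity i j
  have hkl := integrable_mul_mul_stdGaussianDensity k l
  have h0 := integrable_stdGaussianDensity (ι := ι)
  simp only [sub_mul_sub_mul_stdGaussianDensity_eq]
  rw [integral_add (by fun_prop) (by fun_prop), integral_sub (by fun_prop) (by fun_prop),
    integral_sub (by fun_prop) (by fun_prop)]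
  simp only [integral_const_mul, integral_mul_mul_stdGaussianDensity,
    integral_mul_mul_mul_mul_stdGaussianDensity, integral_stdGaussianDensity]
  ring

lemma dotProduct_mul_dotProduct_sub_dotProduct (v w y : ι → ℝ) :
    (v ⬝ᵥ y) * (w ⬝ᵥ y) - v ⬝ᵥ w =
      ∑ p : ι × ι, v p.1 * w p.2 * (y p.1 * y p.2 - if p.1 = p.2 then 1 else 0) := by
  simp only [dotProduct, Fintype.sum_prod_type, Finset.sum_mul_sum, mul_sub,
    Finset.sum_sub_distrib, mul_ite, mul_one, mul_zero, Finset.sum_ite_eq, Finset.mem_univ,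
    if_true]
  congr 1
  exact Finset.sum_congr rfl fun i _ => Finset.sum_congr rfl fun j _ => by ring

theorem integral_dotProduct_sub_mul_sub_mul_stdGaussianDensity (v w u z : ι → ℝ) :
    ∫ y : ι → ℝ, ((v ⬝ᵥ y) * (w ⬝ᵥ y) - v ⬝ᵥ w) * ((u ⬝ᵥ y) * (z ⬝ᵥ y) - u ⬝ᵥ z) *
        stdGaussianDensity y =
      (v ⬝ᵥ u) * (w ⬝ᵥ z) + (v ⬝ᵥ z) * (w ⬝ᵥ u) := by
  set Q : ι × ι → (ι → ℝ) → ℝ := fun p y => y p.1 * y p.2 - if p.1 = p.2 then 1 else 0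
  have hQ : ∀ p q, Integrable fun y => Q p y * Q q y * stdGaussianDensity y :=
    fun p q => integrable_sub_mul_sub_mul_stdGaussianDensity p.1 p.2 q.1 q.2
  have hexpand : ∀ y : ι → ℝ,
      ((v ⬝ᵥ y) * (w ⬝ᵥ y) - v ⬝ᵥ w) * ((u ⬝ᵥ y) * (z ⬝ᵥ y) - u ⬝ᵥ z) * stdGaussianDensity y =
        ∑ p, ∑ q, v p.1 * w p.2 * (u q.1 * z q.2) * (Q p y * Q q y * stdGaussianDensity y) := by
    intro y
    rw [dotProduct_mul_dotProduct_sub_dotProduct, dotProduct_mul_dotProduct_sub_dotProduct,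
      Finset.sum_mul_sum, Finset.sum_mul]
    simp only [Finset.sum_mul]
    exact Finset.sum_congr rfl fun p _ => Finset.sum_congr rfl fun q _ => by ring
  simp only [hexpand]
  rw [integral_finsetSum _ fun p _ => by fun_prop]
  refine (Finset.sum_congr rfl fun p _ => ?_).trans (?_ : ∑ p : ι × ι, ∑ q : ι × ι,
    v p.1 * w p.2 * (u q.1 * z q.2) *
      ((if p.1 = q.1 then 1 else 0) * (if p.2 = q.2 then 1 else 0) +
        (if p.1 = q.2 then 1 else 0) * (if p.2 = q.1 then 1 else 0)) = _)
  · rw [integral_finsetSum _ fun q _ => (hQ p q).const_mul _]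
    simp only [Q, integral_const_mul, integral_sub_mul_sub_mul_stdGaussianDensity]
  · simp only [Fintype.sum_prod_type, mul_add, Finset.sum_add_distrib, mul_ite, mul_one,
      mul_zero, Finset.sum_ite_irrel, Finset.sum_const_zero, Finset.sum_ite_eq, Finset.mem_univ,
      if_true, dotProduct, Finset.sum_mul_sum]
    congr 1 <;> exact Finset.sum_congr rfl fun _ _ => Finset.sum_congr rfl fun _ _ => by ring

end StdGaussianDensity

section MatrixFactor

variable {ι : Type*} [Fintype ι] [DecidableEq ι]

open scoped MatrixOrder in
lemma Matrix.PosDef.exists_mul_transpose_eq {S : Matrix ι ι ℝ} (hS : S.PosDef) :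
    ∃ A : Matrix ι ι ℝ, A.det ≠ 0 ∧ A * Aᵀ = S := by
  have hsq : CFC.sqrt S * CFC.sqrt S = S := CFC.sqrt_mul_sqrt_self S hS.posSemidef.nonneg
  have hsymm : (CFC.sqrt S)ᵀ = CFC.sqrt S := by
    simpa using (CFC.sqrt_nonneg S).posSemidef.isHermitian.eq
  refine ⟨CFC.sqrt S, fun h => hS.det_pos.ne' ?_, by rw [hsymm, hsq]⟩
  rw [← hsq, det_mul, h, zero_mul]

lemma Matrix.mul_transpose_self_inv_mul {R : Type*} [CommRing R] {A : Matrix ι ι R}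
    (hA : IsUnit A.det) : (A * Aᵀ)⁻¹ * A = (A⁻¹)ᵀ := by
  rw [Matrix.mul_inv_rev, Matrix.mul_assoc, nonsing_inv_mul _ hA, Matrix.mul_one,
    transpose_nonsing_inv]

end MatrixFactor

section MvGaussian

variable {n : ℕ}

lemma continuous_mvGaussDensity (μ : Fin n → ℝ) (S : Matrix (Fin n) (Fin n) ℝ) :
    Continuous (mvGaussDensity μ S) := by
  unfold mvGaussDensity
  fun_prop

lemma integral_mvGaussMeasure (μ : Fin n → ℝ) {S : Matrix (Fin n) (Fin n) ℝ} (hS : 0 < S.det)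
    (F : (Fin n → ℝ) → ℝ) :
    ∫ x, F x ∂(mvGaussMeasure μ S) = ∫ x, mvGaussDensity μ S x * F x := by
  rw [mvGaussMeasure, integral_withDensity_eq_integral_toReal_smul
    (continuous_mvGaussDensity μ S).measurable.ennreal_ofReal
    (ae_of_all _ fun _ => ENNReal.ofReal_lt_top)]
  refine integral_congr_ae (ae_of_all _ fun x => ?_)
  dsimp only
  rw [ENNReal.toReal_ofReal (by unfold mvGaussDensity; positivity), smul_eq_mul]

lemma abs_det_mul_mvGaussDensity (μ : Fin n → ℝ) {A : Matrix (Fin n) (Fin n) ℝ}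
    (hA : A.det ≠ 0) (y : Fin n → ℝ) :
    |A.det| * mvGaussDensity μ (A * Aᵀ) (A *ᵥ y + μ) = stdGaussianDensity y := by
  have hquad : (A *ᵥ y) ⬝ᵥ ((A * Aᵀ)⁻¹ *ᵥ (A *ᵥ y)) = y ⬝ᵥ y := by
    rw [mulVec_mulVec, mul_transpose_self_inv_mul hA.isUnit, dotProduct_mulVec,
      vecMul_transpose, mulVec_mulVec, nonsing_inv_mul _ hA.isUnit, one_mulVec]
  have hdet : (A * Aᵀ).det ^ (-(1 : ℝ) / 2) = |A.det|⁻¹ := by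
    rw [det_mul, det_transpose, ← sq, ← sq_abs, ← Real.rpow_natCast,
      ← Real.rpow_mul (abs_nonneg _)]
    norm_num [Real.rpow_neg_one]
  have hconst : (2 * π) ^ (-(n : ℝ) / 2) = (√(2 * π))⁻¹ ^ n := by
    rw [Real.sqrt_eq_rpow, ← Real.rpow_neg (by positivity), ← Real.rpow_natCast,
      ← Real.rpow_mul (by positivity)]
    ring_nf
  rw [mvGaussDensity, add_sub_cancel_right, hquad, hdet, hconst]
  simp only [stdGaussianDensity, gaussianPDFReal_zero_one, Finset.prod_mul_distrib,
    Finset.prod_const, Finset.card_univ, Fintype.card_fin, ← Real.exp_sum, dotProduct,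
    Finset.mul_sum]
  field_simp [abs_ne_zero.mpr hA]

theorem integral_mvGaussMeasure_mul_transpose (μ : Fin n → ℝ) {A : Matrix (Fin n) (Fin n) ℝ}
    (hA : A.det ≠ 0) (F : (Fin n → ℝ) → ℝ) :
    ∫ x, F x ∂(mvGaussMeasure μ (A * Aᵀ)) = ∫ y, F (A *ᵥ y + μ) * stdGaussianDensity y := by
  have hdet : 0 < (A * Aᵀ).det := by
    rw [det_mul, det_transpose]
    exact mul_self_pos.mpr hA
  have hinj : Function.Injective A.mulVec :=
    mulVec_injective_of_isUnit ((isUnit_iff_isUnit_det A).mpr hA.isUnit)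
  have hsurj : Set.range (fun y => A *ᵥ y + μ) = Set.univ :=
    Set.range_eq_univ.mpr fun x => ⟨A⁻¹ *ᵥ (x - μ), by
      simp [mulVec_mulVec, mul_nonsing_inv _ hA.isUnit]⟩
  have hcov := integral_image_eq_integral_abs_det_fderiv_smul volume MeasurableSet.univ
    (f := fun y => A *ᵥ y + μ) (f' := fun _ => LinearMap.toContinuousLinearMap (toLin' A))
    (fun y _ =>
      ((LinearMap.toContinuousLinearMap (toLin' A)).hasFDerivAt.add_const μ).hasFDerivWithinAt)
    (fun _ _ _ _ h => hinj (add_right_cancel h)) (fun x => mvGaussDensity μ (A * Aᵀ) x * F x)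
  rw [Set.image_univ, hsurj, Measure.restrict_univ] at hcov
  rw [integral_mvGaussMeasure μ hdet, hcov]
  refine integral_congr_ae (ae_of_all _ fun y => ?_)
  simp only [ContinuousLinearMap.det, LinearMap.coe_toContinuousLinearMap, LinearMap.det_toLin',
    smul_eq_mul, ← abs_det_mul_mvGaussDensity μ hA y]
  ring

lemma mvScoreSigma_apply (μ : Fin n → ℝ) {S : Matrix (Fin n) (Fin n) ℝ} (hS : S.IsSymm)
    (x : Fin n → ℝ) (a b : Fin n) :
    mvScoreSigma μ S x a b =
      (1 / 2) * ((S⁻¹ *ᵥ (x - μ)) a * (S⁻¹ *ᵥ (x - μ)) b - S⁻¹ a b) := by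
  have hK : (S⁻¹)ᵀ = S⁻¹ := by rw [transpose_nonsing_inv, hS.eq]
  rw [mvScoreSigma, mul_vecMulVec, vecMulVec_mul, ← hK, vecMul_transpose, hK]
  simp only [Matrix.add_apply, Matrix.smul_apply, vecMulVec_apply, smul_eq_mul]
  ring

end MvGaussian

theorem mvGaussian_fisher_Sigma_Sigma_general (n : ℕ) (μ : Fin n → ℝ)
    (S : Matrix (Fin n) (Fin n) ℝ) (hS : S.PosDef) (a b c d : Fin n) :
    ∫ x, mvScoreSigma μ S x a b * mvScoreSigma μ S x c d ∂(mvGaussMeasure μ S) =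
      (1 / 4) * (S⁻¹ a c * S⁻¹ b d + S⁻¹ a d * S⁻¹ b c) := by
  obtain ⟨A, hA, rfl⟩ := hS.exists_mul_transpose_eq
  set B := (A⁻¹)ᵀ
  have hK : (A * Aᵀ)⁻¹ = B * Bᵀ := by
    rw [Matrix.mul_inv_rev, ← transpose_nonsing_inv, transpose_transpose]
  have hscore : ∀ y p q, mvScoreSigma μ (A * Aᵀ) (A *ᵥ y + μ) p q =
      (1 / 2) * ((B p ⬝ᵥ y) * (B q ⬝ᵥ y) - B p ⬝ᵥ B q) := by
    intro y p q
    rw [mvScoreSigma_apply μ (isSymm_mul_transpose_self A), add_sub_cancel_right, mulVec_mulVec,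
      mul_transpose_self_inv_mul hA.isUnit, hK]
    rfl
  have hKentry : ∀ p q, (A * Aᵀ)⁻¹ p q = B p ⬝ᵥ B q := fun p q => by rw [hK]; rfl
  rw [integral_mvGaussMeasure_mul_transpose μ hA]
  simp only [hscore, hKentry]
  rw [← integral_dotProduct_sub_mul_sub_mul_stdGaussianDensity, ← integral_const_mul]
  congr 1 with y
  ring

/-- The (Σ,Σ)-block g_{ΣΣ} = (1/2)Σ⁻¹⊗Σ⁻¹ of the Fisher metric of the multivariate Gaussian
family in symmetrized component form: with K = Σ⁻¹,
∫ M_{ab} M_{cd} dν = (1/4)(K_{ac}K_{bd} + K_{ad}K_{bc}). -/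
theorem mvGaussian_fisher_Sigma_Sigma (n : ℕ) (hn : 1 ≤ n) (μ : Fin n → ℝ)
    (S : Matrix (Fin n) (Fin n) ℝ) (hS : S.PosDef) (hSsymm : S.IsSymm) (a b c d : Fin n) :
    ∫ x, mvScoreSigma μ S x a b * mvScoreSigma μ S x c d ∂(mvGaussMeasure μ S) =
      (1 / 4) * (S⁻¹ a c * S⁻¹ b d + S⁻¹ a d * S⁻¹ b c) :=
  mvGaussian_fisher_Sigma_Sigma_general n μ S hS a b c d
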